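/- arXiv:1510.01613 — 2 statements merged into one kernel-verified Lean document; each statement's English description precedes it below -/
import Mathlib

section
/- Assume the Continuum Hypothesis. Let G be an uncountable abelian Polish group. Then there exists a set X ⊆ G such that both X and its complement G \ X are naively Haar meager. In particular, the naively Haar meager subsets of G do not form an ideal. -/
/-- A set `X` in an abelian Polish group `G` is *naively Haar meager* if there are a nonempty
compact metrizable space `K` and a continuous map `f : K → G` such that `f ⁻¹' (x + X)` is
meager in `K` for every `x ∈ G`. -/
def IsNaivelyAddHaarMeager {G : Type*} [AddGroup G] [TopologicalSpace G] (X : Set G) : Prop :=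
  ∃ (K : Type) (tK : TopologicalSpace K),
    @CompactSpace K tK ∧ @TopologicalSpace.MetrizableSpace K tK ∧ Nonempty K ∧
    ∃ f : K → G, @Continuous K G tK _ f ∧
      ∀ x : G, @IsMeagre K tK (f ⁻¹' ((fun b => x + b) '' X))

/-! Since `G` is uncountable it has no isolated points, so a Cantor scheme of ever smaller balls
yields a continuous injection `φ` of the Cantor space into `G` with `φ a + φ b ≠ φ c + φ d` for
distinct `a, b, c, d`. Split the Cantor space by the first digit into `C₀` and `C₁`; then a
translate of `φ '' C₀` and a translate of `φ '' C₁` share at most one point. Under CH, list `G` as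
`(g_α)_{α < ω₁}` and put `X = ⋃_α ((g_α + φ '' C₁) \ ⋃_{β ≤ α} (g_β + φ '' C₀))` (Sierpiński).
Every translate of `φ '' C₀` meets `X`, and every translate of `φ '' C₁` meets `Xᶜ`, in a countable
set, so `φ` restricted to `C₀`, resp. `C₁`, witnesses that `X`, resp. `Xᶜ`, is naively Haar meager;
by the Baire category theorem, `X ∪ Xᶜ = G` is not. -/

open Set Function Filter Topology TopologicalSpace Metric
open scoped Pointwise Cardinal

instance {α : Type*} [TopologicalSpace α] [Nontrivial α] : PerfectSpace (ℕ → α) := by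
  refine perfectSpace_iff_forall_not_isolated.2 fun x => ?_
  choose other hother using fun n => exists_ne (x n)
  have flip_ne : ∀ n, update x n (other n) ≠ x := fun n h => by
    simpa [hother n] using congrFun h n
  have flip_tendsto : Tendsto (fun n => update x n (other n)) atTop (𝓝 x) :=
    tendsto_pi_nhds.2 fun i => tendsto_const_nhds.congr' <|
      (eventually_gt_atTop i).mono fun n hn => (update_of_ne hn.ne _ _).symm
  exact (tendsto_nhdsWithin_of_tendsto_nhds_of_eventually_within _ flip_tendsto
    (Eventually.of_forall flip_ne)).neBot

theorem Set.Countable.isMeagre {X : Type*} [TopologicalSpace X] [T1Space X] [PerfectSpace X]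
    {s : Set X} (hs : s.Countable) : IsMeagre s := by
  rw [← biUnion_of_singleton s]
  refine isMeagre_biUnion hs fun x _ => IsNowhereDense.isMeagre ?_
  rw [IsNowhereDense, isClosed_singleton.closure_eq, interior_singleton]

theorem isNaivelyAddHaarMeager_of_countable_inter_vadd_range {G : Type*} [AddGroup G]
    [TopologicalSpace G] {f : (ℕ → Bool) → G} (hf : Continuous f) (hfi : Injective f)
    {X : Set G} (hX : ∀ g : G, (X ∩ (g +ᵥ range f)).Countable) : IsNaivelyAddHaarMeager X := by
  refine ⟨ℕ → Bool, inferInstance, inferInstance, inferInstance, inferInstance, f, hf,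
    fun x => Set.Countable.isMeagre ?_⟩
  refine ((hX (-x)).image (x + ·)).preimage hfi |>.mono ?_
  rintro k ⟨b, hb, hbk⟩
  refine ⟨b, ⟨hb, f k, mem_range_self k, ?_⟩, hbk⟩
  simp [← hbk]

theorem not_isNaivelyAddHaarMeager_univ {G : Type*} [AddGroup G] [TopologicalSpace G] :
    ¬ IsNaivelyAddHaarMeager (univ : Set G) := by
  rintro ⟨K, tK, hK, hKm, hKne, f, -, hf⟩
  have : BaireSpace K := BaireSpace.of_t2Space_locallyCompactSpace
  exact not_isMeagre_of_isOpen isOpen_univ univ_nonempty (by simpa using hf 0)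

theorem perfectSpace_of_not_countable {G : Type*} [AddGroup G] [TopologicalSpace G]
    [IsTopologicalAddGroup G] [SeparableSpace G] (hG : ¬ Countable G) : PerfectSpace G := by
  refine perfectSpace_iff_forall_not_isolated.2 fun x => ⟨fun hx => hG ?_⟩
  have : DiscreteTopology G := discreteTopology_of_isOpen_singleton_zero <| by
    simpa using (isOpen_singleton_iff_punctured_nhds x |>.2 hx).preimage (continuous_add_const x)
  exact separableSpace_iff_countable.1 ‹_›

/-- A weak form of the Sidon property: `φ a + φ b = φ c + φ d` forces a repeated index. -/
def AddDistinctSumsOn {ι M : Type*} [Add M] (φ : ι → M) (s : Set ι) : Prop :=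
  ∀ a : Fin 4 → ι, Injective a → (∀ j, a j ∈ s) → φ (a 0) + φ (a 1) ≠ φ (a 2) + φ (a 3)

theorem AddDistinctSumsOn.mono {ι M : Type*} [Add M] {φ : ι → M} {s t : Set ι}
    (h : AddDistinctSumsOn φ t) (hst : s ⊆ t) : AddDistinctSumsOn φ s :=
  fun a ha has => h a ha fun j => hst (has j)

theorem AddDistinctSumsOn.subsingleton_vadd_image_inter_vadd_image {ι G : Type*}
    [AddCommGroup G] {φ : ι → G} {I J : Set ι} (hφ : AddDistinctSumsOn φ (I ∪ J))
    (hinj : InjOn φ (I ∪ J)) (hIJ : Disjoint I J)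
    (g h : G) : ((g +ᵥ φ '' I) ∩ (h +ᵥ φ '' J)).Subsingleton := by
  rintro _ ⟨⟨_, ⟨a, ha, rfl⟩, rfl⟩, ⟨_, ⟨b, hb, rfl⟩, hu⟩⟩
    _ ⟨⟨_, ⟨a', ha', rfl⟩, rfl⟩, ⟨_, ⟨b', hb', rfl⟩, hv⟩⟩
  simp only [vadd_eq_add] at hu hv ⊢
  have hsum : φ a + φ b' = φ a' + φ b :=
    calc φ a + φ b' = (g + φ a) + (h + φ b') - (g + h) := by abel
      _ = (h + φ b) + (g + φ a') - (g + h) := by rw [hu, hv]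
      _ = φ a' + φ b := by abel
  by_contra hne
  have haa' : a ≠ a' := by rintro rfl; exact hne rfl
  have hbb' : b ≠ b' := by
    rintro rfl
    exact haa' (hinj (Or.inl ha) (Or.inl ha') (add_right_cancel hsum))
  have hab := hIJ.ne_of_mem ha hb
  have hab' := hIJ.ne_of_mem ha hb'
  have ha'b := hIJ.ne_of_mem ha' hb
  have ha'b' := hIJ.ne_of_mem ha' hb'
  refine hφ ![a, b', a', b] (fun i j hij => ?_) (fun i => ?_) hsum
  · fin_cases i <;> fin_cases j <;> simp_all [eq_comm]
  · fin_cases i <;> simp [ha, hb, ha', hb']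

theorem AddDistinctSumsOn.update_insert {ι M : Type*} [AddCommMagma M] [DecidableEq ι]
    {y : ι → M} {s : Set ι} {i₀ : ι} {z : M} (hy : AddDistinctSumsOn y s) (hi₀ : i₀ ∉ s)
    (hz : ∀ u ∈ s, ∀ v ∈ s, ∀ w ∈ s, z + y u ≠ y v + y w) :
    AddDistinctSumsOn (update y i₀ z) (insert i₀ s) := by
  intro a ha has
  have hy' : EqOn (update y i₀ z) y s := fun i hi =>
    update_of_ne (ne_of_mem_of_not_mem hi hi₀) _ _
  by_cases hnew : ∃ j, a j = i₀
  · obtain ⟨j, hj⟩ := hnew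
    have hold : ∀ k ≠ j, a k ∈ s := fun k hk => by
      simpa [← hj, ha.ne hk] using has k
    have hold' : ∀ k ≠ j, update y i₀ z (a k) = y (a k) := fun k hk => hy' (hold k hk)
    fin_cases j <;> simp only [Fin.zero_eta, Fin.mk_one, Fin.reduceFinMk] at hj hold hold' <;>
      simp (disch := decide) only [hj, update_self, hold']
    · exact hz _ (hold 1 (by decide)) _ (hold 2 (by decide)) _ (hold 3 (by decide))
    · rw [add_comm]
      exact hz _ (hold 0 (by decide)) _ (hold 2 (by decide)) _ (hold 3 (by decide))
    · exact (hz _ (hold 3 (by decide)) _ (hold 0 (by decide)) _ (hold 1 (by decide))).symm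
    · rw [add_comm (y (a 2))]
      exact (hz _ (hold 2 (by decide)) _ (hold 0 (by decide)) _ (hold 1 (by decide))).symm
  · push Not at hnew
    have hold : ∀ k, a k ∈ s := fun k => by simpa [hnew k] using has k
    simp only [hy' (hold _)]
    exact hy a ha hold

theorem exists_injOn_addDistinctSumsOn_mem {ι G : Type*} [AddCommGroup G] {U : ι → Set G}
    (s : Finset ι) (hU : ∀ i ∈ s, (U i).Infinite) :
    ∃ y : ι → G, (∀ i ∈ s, y i ∈ U i) ∧ InjOn y s ∧ AddDistinctSumsOn y s := by
  classical
  induction s using Finset.induction_on with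
  | empty => exact ⟨0, by simp, by simp, fun a _ ha => by simpa using ha 0⟩
  | insert i₀ s hi₀ ih =>
    obtain ⟨y, hyU, hyinj, hysum⟩ := ih fun i hi => hU i (Finset.mem_insert_of_mem hi)
    -- the new point must avoid the old points and every `y v + y w - y u`
    have hbad : (y '' s ∪ (fun p : ι × ι × ι => y p.2.1 + y p.2.2 - y p.1) ''
        ((s : Set ι) ×ˢ (s : Set ι) ×ˢ (s : Set ι))).Finite :=
      (s.finite_toSet.image _).union
        ((s.finite_toSet.prod (s.finite_toSet.prod s.finite_toSet)).image _)
    obtain ⟨z, hzU, hz⟩ := (hU i₀ (Finset.mem_insert_self _ _)).exists_notMem_finite hbad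
    have hy' : EqOn (update y i₀ z) y s := fun i hi =>
      update_of_ne (ne_of_mem_of_not_mem hi hi₀) _ _
    refine ⟨update y i₀ z, fun i hi => ?_, ?_, ?_⟩
    · rcases Finset.mem_insert.1 hi with rfl | hi
      · simpa using hzU
      · exact hy' hi ▸ hyU i hi
    · rw [Finset.coe_insert, injOn_insert (by simpa using hi₀), hy'.image_eq, update_self]
      exact ⟨hyinj.congr hy'.symm, fun h => hz (Or.inl h)⟩
    · rw [Finset.coe_insert]
      exact hysum.update_insert (by simpa using hi₀) fun u hu v hv w hw h =>
        hz (Or.inr ⟨(u, v, w), ⟨hu, hv, hw⟩, by simp [← h]⟩)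

theorem exists_closedBall_subset_disjoint_sums {ι G : Type*} [AddCommGroup G] [MetricSpace G]
    [ContinuousAdd G] [PerfectSpace G] (s : Finset ι) {U : ι → Set G}
    (hUo : ∀ i ∈ s, IsOpen (U i)) (hUne : ∀ i ∈ s, (U i).Nonempty) {δ : ℝ} (hδ : 0 < δ) :
    ∃ y : ι → G, ∃ ε, 0 < ε ∧ ε ≤ δ ∧ (∀ i ∈ s, closedBall (y i) ε ⊆ U i) ∧
      (∀ i ∈ s, ∀ j ∈ s, i ≠ j → Disjoint (closedBall (y i) ε) (closedBall (y j) ε)) ∧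
      ∀ a : Fin 4 → ι, Injective a → (∀ k, a k ∈ s) →
        Disjoint (closedBall (y (a 0)) ε + closedBall (y (a 1)) ε)
          (closedBall (y (a 2)) ε + closedBall (y (a 3)) ε) := by
  obtain ⟨y, hyU, hyinj, hysum⟩ := exists_injOn_addDistinctSumsOn_mem s fun i hi =>
    (hUne i hi).elim fun x hx => infinite_of_mem_nhds x ((hUo i hi).mem_nhds hx)
  have hsub : ∀ᶠ ε in 𝓝 (0 : ℝ), ∀ i ∈ s, closedBall (y i) ε ⊆ U i :=
    (eventually_all_finset s).2 fun i hi =>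
      eventually_closedBall_subset ((hUo i hi).mem_nhds (hyU i hi))
  have hdisj : ∀ᶠ ε in 𝓝 (0 : ℝ), ∀ i ∈ s, ∀ j ∈ s, i ≠ j →
      Disjoint (closedBall (y i) ε) (closedBall (y j) ε) := by
    refine (eventually_all_finset s).2 fun i hi => (eventually_all_finset s).2 fun j hj =>
      eventually_imp_distrib_left.2 fun hij => ?_
    filter_upwards [eventually_lt_nhds (half_pos (dist_pos.2 (hyinj.ne hi hj hij)))] with ε hε
    exact closedBall_disjoint_closedBall (by linarith)
  have hsums : ∀ᶠ ε in 𝓝 (0 : ℝ), ∀ a ∈ Set.pi univ fun _ : Fin 4 => (s : Set ι),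
      Injective a → Disjoint (closedBall (y (a 0)) ε + closedBall (y (a 1)) ε)
        (closedBall (y (a 2)) ε + closedBall (y (a 3)) ε) := by
    refine (eventually_all_finite (Set.Finite.pi fun _ => s.finite_toSet)).2 fun a ha =>
      eventually_imp_distrib_left.2 fun hainj => ?_
    have hW : {P : Fin 4 → G | P 0 + P 1 ≠ P 2 + P 3} ∈ 𝓝 (y ∘ a) :=
      (isOpen_ne_fun (by fun_prop) (by fun_prop)).mem_nhds (hysum a hainj fun k => ha k trivial)
    filter_upwards [eventually_closedBall_subset hW] with ε hε
    rw [Set.disjoint_left]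
    rintro _ ⟨p, hp, q, hq, rfl⟩ ⟨p', hp', q', hq', heq⟩
    have hε0 : 0 ≤ ε := dist_nonneg.trans hp
    have hP : ![p, q, p', q'] ∈ closedBall (y ∘ a) ε := by
      rw [mem_closedBall, dist_pi_le_iff hε0]
      intro k
      fin_cases k <;> assumption
    exact hε hP heq.symm
  obtain ⟨ε, ⟨hεδ, hεsub, hεdisj, hεsums⟩, hεpos⟩ :=
    (((eventually_le_nhds hδ).and (hsub.and (hdisj.and hsums))).filter_mono
      nhdsWithin_le_nhds |>.and (self_mem_nhdsWithin (s := Ioi 0))).exists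
  exact ⟨y, ε, hεpos, hεδ, hεsub, hεdisj, fun a ha has => hεsums a (fun k _ => has k) ha⟩

theorem eventually_injective_res {ι β : Type*} [Finite ι] {x : ι → ℕ → β} (hx : Injective x) :
    ∀ᶠ n in atTop, Injective fun i => PiNat.res (x i) n := by
  refine eventually_all.2 fun i => eventually_all.2 fun j => ?_
  rcases eq_or_ne i j with rfl | hij
  · exact Eventually.of_forall fun _ _ => rfl
  obtain ⟨m, hm⟩ := ne_iff.1 (hx.ne hij)
  filter_upwards [eventually_gt_atTop m] with n hn hres
  exact absurd (PiNat.res_eq_res.1 hres hn) hm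

section SidonScheme

variable {G : Type*} [AddCommGroup G] [MetricSpace G]

/-- The nodes of level `n` of a Cantor scheme are the lists of length `n`; the values of `c`
at other lists are irrelevant. -/
def IsSidonLevel (n : ℕ) (c : List Bool → G) (r : ℝ) : Prop :=
  0 < r ∧ r ≤ (1 / 2) ^ n ∧
    (∀ l, l.length = n → ∀ l', l'.length = n → l ≠ l' →
      Disjoint (closedBall (c l) r) (closedBall (c l') r)) ∧
    ∀ a : Fin 4 → List Bool, Injective a → (∀ k, (a k).length = n) →
      Disjoint (closedBall (c (a 0)) r + closedBall (c (a 1)) r)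
        (closedBall (c (a 2)) r + closedBall (c (a 3)) r)

theorem isSidonLevel_zero : IsSidonLevel 0 (0 : List Bool → G) 1 := by
  have hnil : ∀ l : List Bool, l.length = 0 → l = [] := fun _ => List.eq_nil_of_length_eq_zero
  refine ⟨one_pos, by simp,
    fun l hl l' hl' hne => absurd ((hnil l hl).trans (hnil l' hl').symm) hne,
    fun a ha hlen => absurd ((hnil _ (hlen 0)).trans (hnil _ (hlen 1)).symm) (ha.ne (by decide))⟩

variable [ContinuousAdd G] [PerfectSpace G]

theorem IsSidonLevel.exists_succ {n : ℕ} {c : List Bool → G} {r : ℝ} (h : IsSidonLevel n c r) :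
    ∃ p : (List Bool → G) × ℝ, IsSidonLevel (n + 1) p.1 p.2 ∧
      ∀ l : List Bool, l.length = n + 1 → closedBall (p.1 l) p.2 ⊆ closedBall (c l.tail) r := by
  have hfin := List.finite_length_eq Bool (n + 1)
  obtain ⟨y, ε, hεpos, hεle, hsub, hdisj, hsums⟩ :=
    exists_closedBall_subset_disjoint_sums hfin.toFinset (U := fun l => ball (c l.tail) r)
      (fun _ _ => isOpen_ball) (fun _ _ => nonempty_ball.2 h.1)
      (by positivity : (0 : ℝ) < (1 / 2) ^ (n + 1))
  simp only [Set.Finite.mem_toFinset, mem_ofPred_eq] at hsub hdisj hsums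
  exact ⟨(y, ε), ⟨hεpos, hεle, hdisj, hsums⟩, fun l hl => (hsub l hl).trans ball_subset_closedBall⟩

variable (G) in
noncomputable def sidonLevel : (n : ℕ) → {p : (List Bool → G) × ℝ // IsSidonLevel n p.1 p.2}
  | 0 => ⟨(0, 1), isSidonLevel_zero⟩
  | n + 1 => ⟨(sidonLevel n).2.exists_succ.choose, (sidonLevel n).2.exists_succ.choose_spec.1⟩

variable (G) in
noncomputable def sidonScheme (l : List Bool) : Set G :=
  closedBall ((sidonLevel G l.length).1.1 l) (sidonLevel G l.length).1.2

theorem sidonScheme_of_length_eq {l : List Bool} {n : ℕ} (hl : l.length = n) :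
    sidonScheme G l = closedBall ((sidonLevel G n).1.1 l) (sidonLevel G n).1.2 := by
  subst hl; rfl

theorem sidonScheme_cons_subset (b : Bool) (l : List Bool) :
    sidonScheme G (b :: l) ⊆ sidonScheme G l :=
  (sidonLevel G l.length).2.exists_succ.choose_spec.2 (b :: l) rfl

theorem sidonScheme_closureAntitone : CantorScheme.ClosureAntitone (sidonScheme G) :=
  CantorScheme.Antitone.closureAntitone (fun l b => sidonScheme_cons_subset b l)
    fun _ => isClosed_closedBall

theorem sidonScheme_disjoint : CantorScheme.Disjoint (sidonScheme G) := fun l a b hab =>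
  (sidonLevel G (l.length + 1)).2.2.2.1 (a :: l) rfl (b :: l) rfl (by simpa using hab)

theorem sidonScheme_vanishingDiam : CantorScheme.VanishingDiam (sidonScheme G) := by
  intro x
  have hbound : ∀ n,
      Metric.ediam (sidonScheme G (PiNat.res x n)) ≤ ENNReal.ofReal (2 * (1 / 2) ^ n) := by
    intro n
    rw [sidonScheme_of_length_eq (PiNat.res_length x n)]
    refine ediam_le_of_forall_dist_le fun p hp q hq => ?_
    have hr := (sidonLevel G n).2.2.1
    linarith [dist_triangle_right p q ((sidonLevel G n).1.1 (PiNat.res x n)), mem_closedBall.1 hp,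
      mem_closedBall.1 hq]
  have hlim : Tendsto (fun n : ℕ => ENNReal.ofReal (2 * (1 / 2) ^ n)) atTop (𝓝 0) := by
    have hpow := tendsto_pow_atTop_nhds_zero_of_lt_one (r := (1 / 2 : ℝ))
      (by norm_num) (by norm_num)
    simpa using ENNReal.tendsto_ofReal (hpow.const_mul 2)
  exact tendsto_of_tendsto_of_tendsto_of_le_of_le tendsto_const_nhds hlim (fun _ => bot_le) hbound

end SidonScheme

theorem exists_continuous_injective_addDistinctSumsOn_univ {G : Type*} [AddCommGroup G]
    [MetricSpace G] [CompleteSpace G] [ContinuousAdd G] [PerfectSpace G] :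
    ∃ φ : (ℕ → Bool) → G, Continuous φ ∧ Injective φ ∧ AddDistinctSumsOn φ univ := by
  have hdom : ∀ x, x ∈ (CantorScheme.inducedMap (sidonScheme G)).1 := fun x => by
    rw [sidonScheme_closureAntitone.map_of_vanishingDiam sidonScheme_vanishingDiam
      fun l => nonempty_closedBall.2 (sidonLevel G l.length).2.1.le]
    trivial
  refine ⟨fun x => (CantorScheme.inducedMap (sidonScheme G)).2 ⟨x, hdom x⟩,
    sidonScheme_vanishingDiam.map_continuous.comp (by fun_prop),
    fun x y hxy => congrArg Subtype.val (sidonScheme_disjoint.map_injective hxy),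
    fun a ha _ heq => ?_⟩
  obtain ⟨n, hn⟩ := (eventually_injective_res ha).exists
  have hmem : ∀ k, (CantorScheme.inducedMap (sidonScheme G)).2 ⟨a k, hdom (a k)⟩ ∈
      closedBall ((sidonLevel G n).1.1 (PiNat.res (a k) n)) (sidonLevel G n).1.2 := fun k => by
    rw [← sidonScheme_of_length_eq (PiNat.res_length _ n)]
    exact CantorScheme.map_mem _ n
  exact Set.disjoint_left.1 ((sidonLevel G n).2.2.2.2 _ hn fun _ => PiNat.res_length _ n)
    (add_mem_add (hmem 0) (hmem 1)) (heq ▸ add_mem_add (hmem 2) (hmem 3))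

theorem exists_continuous_injective_subsingleton_vadd_range_inter (G : Type*) [AddCommGroup G]
    [MetricSpace G] [CompleteSpace G] [ContinuousAdd G] [PerfectSpace G] :
    ∃ f : Bool → (ℕ → Bool) → G, (∀ b, Continuous (f b)) ∧ (∀ b, Injective (f b)) ∧
      ∀ g h : G, ((g +ᵥ range (f false)) ∩ (h +ᵥ range (f true))).Subsingleton := by
  obtain ⟨φ, hφc, hφi, hφs⟩ := exists_continuous_injective_addDistinctSumsOn_univ (G := G)
  -- `cons b x` prepends the digit `b` to the sequence `x`
  let cons : Bool → (ℕ → Bool) → ℕ → Bool := fun b x n => Nat.rec b (fun n _ => x n) n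
  have cons_disjoint : Disjoint (range (cons false)) (range (cons true)) :=
    Set.disjoint_left.2 fun _ ⟨_, hx⟩ ⟨_, hy⟩ => by simpa using congrFun (hx.trans hy.symm) 0
  refine ⟨fun b => φ ∘ cons b, fun b => hφc.comp (continuous_pi fun n => by cases n <;> fun_prop),
    fun b => hφi.comp fun x y hxy => funext fun n => congrFun hxy (n + 1), fun g h => ?_⟩
  rw [range_comp, range_comp]
  exact (hφs.mono (subset_univ _)).subsingleton_vadd_image_inter_vadd_image hφi.injOn
    cons_disjoint g h

theorem exists_injective_nat_bool (α : Type*) [TopologicalSpace α] [PolishSpace α] :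
    ∃ f : α → ℕ → Bool, Injective f := by
  borelize α
  obtain ⟨f, -, hf⟩ := MeasurableSpace.measurable_injection_nat_bool_of_countablySeparated α
  exact ⟨f, hf⟩

theorem exists_injective_nat_bool_toType_aleph_one (hCH : 𝔠 = (ℵ₁ : Cardinal.{0})) :
    ∃ f : (ℕ → Bool) → (ℵ₁ : Cardinal.{0}).ord.ToType, Injective f := by
  have : #(ℕ → Bool) ≤ #(ℵ₁ : Cardinal.{0}).ord.ToType := by
    rw [Cardinal.mk_ord_toType, ← hCH, ← Cardinal.two_power_aleph0, Cardinal.mk_arrow]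
    simp
  exact Cardinal.le_def _ _ |>.1 this |>.elim fun f => ⟨f, f.injective⟩

theorem countable_Iic_toType_aleph_one (x : (ℵ₁ : Cardinal.{0}).ord.ToType) :
    (Iic x).Countable := by
  have hIio : #(Iio x) < ℵ₁ := by
    simpa using Cardinal.mk_Iio_lt x (by rw [Cardinal.mk_ord_toType, Ordinal.type_toType])
  rw [← Iio_insert]
  exact (Cardinal.le_aleph0_iff_set_countable.1 (Cardinal.lt_aleph_one_iff.1 hIio)).insert x

theorem exists_rank_countable_le_of_continuum_eq_aleph_one (hCH : 𝔠 = (ℵ₁ : Cardinal.{0}))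
    (α : Type*) [TopologicalSpace α] [PolishSpace α] :
    ∃ r : α → (ℵ₁ : Cardinal.{0}).ord.ToType, ∀ a, {b | r b ≤ r a}.Countable := by
  obtain ⟨f, hf⟩ := exists_injective_nat_bool α
  obtain ⟨e, he⟩ := exists_injective_nat_bool_toType_aleph_one hCH
  exact ⟨e ∘ f, fun a => (countable_Iic_toType_aleph_one _).preimage (he.comp hf)⟩

theorem exists_countable_inter_and_compl_inter {α ι β : Type*} [LinearOrder β] (r : ι → β)
    (hr : ∀ g, {h | r h ≤ r g}.Countable) (S T : ι → Set α)
    (hST : ∀ g h, (S g ∩ T h).Countable) :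
    ∃ X : Set α, (∀ g, (X ∩ S g).Countable) ∧ ∀ g, (Xᶜ ∩ T g).Countable := by
  refine ⟨⋃ h, T h \ ⋃ h' ∈ {h' | r h' ≤ r h}, S h', fun g => ?_, fun g => ?_⟩
  · refine ((hr g).biUnion fun h _ => hST g h).mono ?_
    rintro x ⟨hxX, hxS⟩
    obtain ⟨h, hxT, hxS'⟩ := mem_iUnion.1 hxX
    have hhg : r h ≤ r g := le_of_not_ge fun hgh => hxS' (mem_biUnion hgh hxS)
    exact mem_biUnion hhg ⟨hxS, hxT⟩
  · refine ((hr g).biUnion fun h _ => hST h g).mono ?_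
    rintro x ⟨hxX, hxT⟩
    have : x ∈ ⋃ h ∈ {h | r h ≤ r g}, S h := by
      by_contra hxS
      exact hxX (mem_iUnion.2 ⟨g, hxT, hxS⟩)
    obtain ⟨h, hhg, hxS⟩ := mem_iUnion₂.1 this
    exact mem_biUnion hhg ⟨hxS, hxT⟩

/-- Under CH, every uncountable abelian Polish group can be split into a naively Haar meager
set and its complement which is also naively Haar meager; in particular, the naively Haar
meager sets do not form an ideal. -/
theorem exists_naivelyHaarMeager_with_naivelyHaarMeager_complement
    (hCH : Cardinal.continuum.{0} = Cardinal.aleph 1)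
    {G : Type*} [AddCommGroup G] [TopologicalSpace G] [IsTopologicalAddGroup G] [PolishSpace G]
    (hG : ¬ Countable G) :
    (∃ X : Set G, IsNaivelyAddHaarMeager X ∧ IsNaivelyAddHaarMeager Xᶜ) ∧
    ¬ ∀ X Y : Set G, IsNaivelyAddHaarMeager X → IsNaivelyAddHaarMeager Y →
        IsNaivelyAddHaarMeager (X ∪ Y) := by
  let := upgradeIsCompletelyMetrizable G
  have := perfectSpace_of_not_countable hG
  obtain ⟨f, hfc, hfi, hf⟩ := exists_continuous_injective_subsingleton_vadd_range_inter G
  obtain ⟨r, hr⟩ := exists_rank_countable_le_of_continuum_eq_aleph_one hCH G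
  obtain ⟨X, hX, hXc⟩ := exists_countable_inter_and_compl_inter r hr
    (fun g => g +ᵥ range (f false)) (fun h => h +ᵥ range (f true)) fun g h => (hf g h).countable
  have hXm := isNaivelyAddHaarMeager_of_countable_inter_vadd_range (hfc false) (hfi false) hX
  have hXcm := isNaivelyAddHaarMeager_of_countable_inter_vadd_range (hfc true) (hfi true)
    fun g => by simpa [inter_comm] using hXc g
  exact ⟨⟨X, hXm, hXcm⟩, fun h => not_isNaivelyAddHaarMeager_univ (by
    simpa using h X Xᶜ hXm hXcm)⟩
end

section
/- Let G be a Polish group and let H be an uncountable closed subgroup of G which is contained in the center of G. Suppose that H (viewed as an abelian Polish group with the subspace topology) is the union of a set which is Haar null in H and a set which is Haar meager in H. Then G is the union of a set which is Haar null in G and a set which is Haar meager in G. -/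
/-!
Choosing a point of each coset `gH` in a Borel way (a Kuratowski–Ryll-Nardzewski selection,
possible because `g ↦ gH` takes closed values and `{g | gH ∩ U ≠ ∅} = UH` is open) yields a Borel
map `τ : G → H` with `τ (g * x) = τ g * x` for `x ∈ H`. As `H` is central, the trace on `H` of a
two-sided translate `g • τ⁻¹(E) • h` is the translate `τ(g⁻¹h⁻¹)⁻¹ • E`. Hence `τ⁻¹` carries a
Haar null (Haar meager) subset of `H` to one of `G`, witnessed by the pushforward of the measure
(the composition of the test map with the inclusion), and it preserves the covering `A ∪ B = H`.
-/

/-- A set `A` in a Polish group `G` is *Haar meager* if there are a Borel set `B ⊇ A`,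
a nonempty compact metrizable space `K` and a continuous map `f : K → G` such that
`f ⁻¹' (g • B • h)` is meager in `K` for all `g, h ∈ G`. -/
def IsHaarMeager {G : Type*} [Group G] [TopologicalSpace G] (A : Set G) : Prop :=
  ∃ B : Set G, A ⊆ B ∧ @MeasurableSet G (borel G) B ∧
    ∃ (K : Type) (tK : TopologicalSpace K),
      @CompactSpace K tK ∧ @TopologicalSpace.MetrizableSpace K tK ∧ Nonempty K ∧
      ∃ f : K → G, @Continuous K G tK _ f ∧
        ∀ g h : G, @IsMeagre K tK (f ⁻¹' ((fun b => g * b * h) '' B))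

/-- A set `A` in a Polish group `G` is *Haar null* if there are a Borel set `B ⊇ A` and a
Borel probability measure `μ` on `G` such that `μ (g • B • h) = 0` for all `g, h ∈ G`. -/
def IsHaarNull {G : Type*} [Group G] [TopologicalSpace G] (A : Set G) : Prop :=
  ∃ B : Set G, A ⊆ B ∧ @MeasurableSet G (borel G) B ∧
    ∃ μ : @MeasureTheory.Measure G (borel G),
      @MeasureTheory.IsProbabilityMeasure G (borel G) μ ∧
      ∀ g h : G, μ ((fun b => g * b * h) '' B) = 0

open Set Metric MeasureTheory Filter Topology
open scoped Pointwise

def WeaklyMeasurable {α X : Type*} [MeasurableSpace α] [TopologicalSpace X] (Φ : α → Set X) :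
    Prop :=
  ∀ U : Set X, IsOpen U → MeasurableSet {a | (Φ a ∩ U).Nonempty}

namespace MeasurableSelection

variable {X : Type*} [MetricSpace X] (u : ℕ → X)

/- Stage `k + 1` cuts the current set down to the ball of radius `2⁻¹ ^ k` about the first point
of the dense sequence `u` whose ball meets it; the centres of these balls form a Cauchy sequence
whose limit `select u S` lies in `closure S` and depends measurably on `S`. -/
open scoped Classical in
noncomputable def nearIndex (r : ℝ) (T : Set X) : ℕ :=
  if h : ∃ n, (T ∩ ball (u n) r).Nonempty then Nat.find h else 0

noncomputable def shrink (r : ℝ) (T : Set X) : Set X :=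
  T ∩ ball (u (nearIndex u r T)) r

noncomputable def approxSet (S : Set X) : ℕ → Set X
  | 0 => S
  | k + 1 => shrink u (2⁻¹ ^ k) (approxSet S k)

noncomputable def center (S : Set X) (k : ℕ) : X :=
  u (nearIndex u (2⁻¹ ^ k) (approxSet u S k))

noncomputable def select [Nonempty X] (S : Set X) : X :=
  limUnder atTop (center u S)

variable {u}

lemma exists_inter_ball_nonempty (hu : DenseRange u) {T : Set X} (hT : T.Nonempty) {r : ℝ}
    (hr : 0 < r) : ∃ n, (T ∩ ball (u n) r).Nonempty := by
  obtain ⟨y, hy⟩ := hT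
  obtain ⟨n, hn⟩ := hu.exists_dist_lt y hr
  exact ⟨n, y, hy, hn⟩

open scoped Classical in
lemma nearIndex_eq_find (hu : DenseRange u) {T : Set X} (hT : T.Nonempty) {r : ℝ} (hr : 0 < r) :
    nearIndex u r T = Nat.find (exists_inter_ball_nonempty hu hT hr) := by
  rw [nearIndex, dif_pos]

lemma shrink_nonempty (hu : DenseRange u) {T : Set X} (hT : T.Nonempty) {r : ℝ} (hr : 0 < r) :
    (shrink u r T).Nonempty := by
  classical
  rw [shrink, nearIndex_eq_find hu hT hr]
  exact Nat.find_spec (exists_inter_ball_nonempty hu hT hr)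

lemma approxSet_nonempty (hu : DenseRange u) {S : Set X} (hS : S.Nonempty) :
    ∀ k, (approxSet u S k).Nonempty
  | 0 => hS
  | k + 1 => shrink_nonempty hu (approxSet_nonempty hu hS k) (by positivity)

lemma approxSet_subset (S : Set X) : ∀ k, approxSet u S k ⊆ S
  | 0 => subset_rfl
  | k + 1 => inter_subset_left.trans (approxSet_subset S k)

lemma approxSet_succ_subset_ball (S : Set X) (k : ℕ) :
    approxSet u S (k + 1) ⊆ ball (center u S k) (2⁻¹ ^ k) :=
  inter_subset_right

lemma dist_center_succ_le (hu : DenseRange u) {S : Set X} (hS : S.Nonempty) (k : ℕ) :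
    dist (center u S k) (center u S (k + 1)) ≤ 4 / 2 / 2 ^ k := by
  obtain ⟨y, hy⟩ := approxSet_nonempty hu hS (k + 2)
  have hk : dist y (center u S k) < 2⁻¹ ^ k :=
    approxSet_succ_subset_ball S k (inter_subset_left hy)
  have hk' : dist y (center u S (k + 1)) < 2⁻¹ ^ (k + 1) :=
    approxSet_succ_subset_ball S (k + 1) hy
  calc dist (center u S k) (center u S (k + 1))
      ≤ dist y (center u S k) + dist y (center u S (k + 1)) := dist_triangle_left _ _ _
    _ ≤ 2⁻¹ ^ k + 2⁻¹ ^ (k + 1) := by linarith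
    _ ≤ 4 / 2 / 2 ^ k := by rw [pow_succ, inv_pow]; field_simp; norm_num

variable {α : Type*} [MeasurableSpace α] {Φ : α → Set X}

lemma measurable_nearIndex (hu : DenseRange u) (hne : ∀ a, (Φ a).Nonempty)
    (hΦ : WeaklyMeasurable Φ) {r : ℝ} (hr : 0 < r) :
    Measurable fun a ↦ nearIndex u r (Φ a) := by
  classical
  simp_rw [nearIndex_eq_find hu (hne _) hr]
  exact measurable_find _ fun n ↦ hΦ _ isOpen_ball

lemma weaklyMeasurable_shrink (hu : DenseRange u) (hne : ∀ a, (Φ a).Nonempty)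
    (hΦ : WeaklyMeasurable Φ) {r : ℝ} (hr : 0 < r) :
    WeaklyMeasurable fun a ↦ shrink u r (Φ a) := by
  intro U hU
  have hunion : {a | (shrink u r (Φ a) ∩ U).Nonempty} =
      ⋃ n, (fun a ↦ nearIndex u r (Φ a)) ⁻¹' {n} ∩ {a | (Φ a ∩ (ball (u n) r ∩ U)).Nonempty} := by
    ext a
    simp [shrink, inter_assoc]
  rw [hunion]
  exact .iUnion fun n ↦ (measurable_nearIndex hu hne hΦ hr (measurableSet_singleton n)).inter
    (hΦ _ (isOpen_ball.inter hU))

lemma weaklyMeasurable_approxSet (hu : DenseRange u) (hne : ∀ a, (Φ a).Nonempty)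
    (hΦ : WeaklyMeasurable Φ) : ∀ k, WeaklyMeasurable fun a ↦ approxSet u (Φ a) k
  | 0 => hΦ
  | k + 1 => weaklyMeasurable_shrink hu (fun a ↦ approxSet_nonempty hu (hne a) k)
      (weaklyMeasurable_approxSet hu hne hΦ k) (by positivity)

variable [Nonempty X] [CompleteSpace X]

lemma tendsto_center (hu : DenseRange u) {S : Set X} (hS : S.Nonempty) :
    Tendsto (center u S) atTop (𝓝 (select u S)) :=
  (cauchySeq_of_le_geometric_two (dist_center_succ_le hu hS)).tendsto_limUnder

lemma select_mem_closure (hu : DenseRange u) {S : Set X} (hS : S.Nonempty) :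
    select u S ∈ closure S := by
  have hnear : ∀ k, ∃ y ∈ S, dist (center u S k) y < 2⁻¹ ^ k := fun k ↦
    let ⟨y, hy⟩ := approxSet_nonempty hu hS (k + 1)
    ⟨y, approxSet_subset S _ hy, by rw [dist_comm]; exact approxSet_succ_subset_ball S k hy⟩
  choose y hyS hy using hnear
  refine mem_closure_of_tendsto ((tendsto_center hu hS).congr_dist ?_) (.of_forall hyS)
  exact squeeze_zero (fun _ ↦ dist_nonneg) (fun k ↦ (hy k).le)
    (tendsto_pow_atTop_nhds_zero_of_lt_one (by norm_num) (by norm_num))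

lemma measurable_select [MeasurableSpace X] [BorelSpace X]
    (hu : DenseRange u) (hne : ∀ a, (Φ a).Nonempty)
    (hΦ : WeaklyMeasurable Φ) : Measurable fun a ↦ select u (Φ a) := by
  refine measurable_of_tendsto_metrizable (f := fun k a ↦ center u (Φ a) k) (fun k ↦ ?_)
    (tendsto_pi_nhds.2 fun a ↦ tendsto_center hu (hne a))
  exact measurable_from_nat.comp (measurable_nearIndex hu (fun a ↦ approxSet_nonempty hu (hne a) k)
    (weaklyMeasurable_approxSet hu hne hΦ k) (by positivity))

end MeasurableSelection

open MeasurableSelection in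
theorem exists_measurable_selection {α X : Type*} [MeasurableSpace α] [TopologicalSpace X]
    [PolishSpace X] [MeasurableSpace X] [BorelSpace X] {Φ : α → Set X}
    (hclosed : ∀ a, IsClosed (Φ a)) (hne : ∀ a, (Φ a).Nonempty) (hΦ : WeaklyMeasurable Φ) :
    ∃ σ : α → X, Measurable σ ∧ (∀ a, σ a ∈ Φ a) ∧ ∀ a b, Φ a = Φ b → σ a = σ b := by
  rcases isEmpty_or_nonempty α with hα | ⟨⟨a⟩⟩
  · exact ⟨isEmptyElim, measurable_of_empty _, isEmptyElim, isEmptyElim⟩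
  let := TopologicalSpace.upgradeIsCompletelyMetrizable X
  have : Nonempty X := ⟨(hne a).some⟩
  obtain ⟨u, hu⟩ := TopologicalSpace.exists_dense_seq X
  refine ⟨fun a ↦ select u (Φ a), measurable_select hu hne hΦ, fun a ↦ ?_,
    fun a b h ↦ congrArg (select u) h⟩
  simpa only [(hclosed a).closure_eq] using select_mem_closure hu (hne a)

section Group

variable {G : Type*} [Group G] [TopologicalSpace G]

theorem weaklyMeasurable_leftCoset [MeasurableSpace G] [OpensMeasurableSpace G]
    [ContinuousMul G] (H : Subgroup G) : WeaklyMeasurable fun g : G ↦ g • (H : Set G) := by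
  intro U hU
  have hUH : {g : G | (g • (H : Set G) ∩ U).Nonempty} = U * (H : Set G) := by
    ext g
    simp only [mem_ofPred_eq, Set.mem_mul, SetLike.mem_coe]
    constructor
    · rintro ⟨_, ⟨x, hx, rfl⟩, hU⟩
      exact ⟨g * x, hU, x⁻¹, H.inv_mem hx, by group⟩
    · rintro ⟨y, hy, x, hx, rfl⟩
      exact ⟨y, ⟨x⁻¹, H.inv_mem hx, by simp⟩, hy⟩
  rw [hUH]
  exact hU.mul_right.measurableSet

theorem Subgroup.exists_measurable_map_mul_eq [IsTopologicalGroup G] [PolishSpace G]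
    [MeasurableSpace G] [BorelSpace G] (H : Subgroup G) (hH : IsClosed (H : Set G)) :
    ∃ τ : G → H, Measurable τ ∧ ∀ g (x : H), τ (g * x) = τ g * x := by
  obtain ⟨σ, hσ, hσH, hσeq⟩ := exists_measurable_selection (fun g ↦ hH.smul g)
    (fun g ↦ ⟨g, mem_own_leftCoset H.toSubmonoid g⟩) (weaklyMeasurable_leftCoset H)
  have hcoset : ∀ (g : G) (x : H), (g * x) • (H : Set G) = g • (H : Set G) := fun g x ↦ by
    rw [mul_smul, leftCoset_mem_leftCoset H x.2]
  refine ⟨fun g ↦ ⟨(σ g)⁻¹ * g, ?_⟩, ?_, fun g x ↦ ?_⟩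
  · simpa using H.inv_mem ((mem_leftCoset_iff g).1 (hσH g))
  · exact (hσ.inv.mul measurable_id).subtype_mk
  · ext
    simp [hσeq _ _ (hcoset g x), mul_assoc]

end Group

theorem image_mul_mul_eq_preimage {G : Type*} [Group G] (g h : G) (S : Set G) :
    (fun b ↦ g * b * h) '' S = (fun y ↦ g⁻¹ * y * h⁻¹) ⁻¹' S :=
  congrFun (image_eq_preimage_of_inverse (f := fun b ↦ g * b * h) (fun b ↦ by group)
    (fun y ↦ by group)) S

section Transfer

variable {G H : Type*} [Group G] [Group H] {φ : H →* G} {τ : G → H}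

theorem preimage_image_mul_mul_preimage (hφ : ∀ x, φ x ∈ Subgroup.center G)
    (hτ : ∀ g x, τ (g * φ x) = τ g * x) (g h : G) (E : Set H) :
    φ ⁻¹' ((fun b ↦ g * b * h) '' (τ ⁻¹' E)) = (fun b ↦ (τ (g⁻¹ * h⁻¹))⁻¹ * b * 1) '' E := by
  rw [image_mul_mul_eq_preimage, image_mul_mul_eq_preimage]
  ext x
  simp only [mem_preimage, inv_inv, inv_one, mul_one]
  rw [mul_assoc, ← Subgroup.mem_center_iff.1 (hφ x) h⁻¹, ← mul_assoc, hτ]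

variable [TopologicalSpace G] [MeasurableSpace G] [BorelSpace G]
  [TopologicalSpace H] [MeasurableSpace H] [BorelSpace H]

theorem IsHaarNull.preimage [ContinuousMul G] {A : Set H} (hA : IsHaarNull A)
    (hφc : Continuous φ) (hφ : ∀ x, φ x ∈ Subgroup.center G) (hτm : Measurable τ)
    (hτ : ∀ g x, τ (g * φ x) = τ g * x) : IsHaarNull (τ ⁻¹' A) := by
  borelize G H
  obtain ⟨B, hAB, hB, μ, hμ, hμB⟩ := hA
  refine ⟨τ ⁻¹' B, preimage_mono hAB, hτm hB, μ.map φ,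
    Measure.isProbabilityMeasure_map hφc.aemeasurable, fun g h ↦ ?_⟩
  have hmeas : MeasurableSet ((fun b ↦ g * b * h) '' (τ ⁻¹' B)) := by
    rw [image_mul_mul_eq_preimage]
    exact (hτm hB).preimage ((measurable_const_mul g⁻¹).mul_const h⁻¹)
  rw [Measure.map_apply hφc.measurable hmeas, preimage_image_mul_mul_preimage hφ hτ]
  exact hμB _ _

theorem IsHaarMeager.preimage {A : Set H} (hA : IsHaarMeager A)
    (hφc : Continuous φ) (hφ : ∀ x, φ x ∈ Subgroup.center G) (hτm : Measurable τ)
    (hτ : ∀ g x, τ (g * φ x) = τ g * x) : IsHaarMeager (τ ⁻¹' A) := by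
  borelize G H
  obtain ⟨B, hAB, hB, K, tK, hK, hKm, hKne, f, hf, hfB⟩ := hA
  refine ⟨τ ⁻¹' B, preimage_mono hAB, hτm hB, K, tK, hK, hKm, hKne, φ ∘ f, hφc.comp hf,
    fun g h ↦ ?_⟩
  rw [preimage_comp, preimage_image_mul_mul_preimage hφ hτ]
  exact hfB _ _

end Transfer

theorem union_haarNull_haarMeager_of_central_subgroup_general {G : Type*} [Group G]
    [TopologicalSpace G] [IsTopologicalGroup G] [PolishSpace G]
    (H : Subgroup G) (hclosed : IsClosed (H : Set G)) (hcentral : H ≤ Subgroup.center G)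
    (hH : ∃ A B : Set ↥H, IsHaarNull A ∧ IsHaarMeager B ∧ A ∪ B = Set.univ) :
    ∃ A B : Set G, IsHaarNull A ∧ IsHaarMeager B ∧ A ∪ B = Set.univ := by
  borelize G
  obtain ⟨τ, hτm, hτ⟩ := H.exists_measurable_map_mul_eq hclosed
  obtain ⟨A, B, hA, hB, hAB⟩ := hH
  have hφ : ∀ x : H, H.subtype x ∈ Subgroup.center G := fun x ↦ hcentral x.2
  refine ⟨τ ⁻¹' A, τ ⁻¹' B, hA.preimage continuous_subtype_val hφ hτm hτ,
    hB.preimage continuous_subtype_val hφ hτm hτ, ?_⟩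
  rw [← preimage_union, hAB, preimage_univ]

/-- If `H` is an uncountable closed central subgroup of a Polish group `G` and `H` (as a
Polish group with the subspace topology) is the union of a Haar null set and a Haar meager
set, then so is `G`. -/
theorem union_haarNull_haarMeager_of_central_subgroup {G : Type*} [Group G]
    [TopologicalSpace G] [IsTopologicalGroup G] [PolishSpace G]
    (H : Subgroup G) (hclosed : IsClosed (H : Set G)) (hcentral : H ≤ Subgroup.center G)
    (huncount : ¬ Countable ↥H)
    (hH : ∃ A B : Set ↥H, IsHaarNull A ∧ IsHaarMeager B ∧ A ∪ B = Set.univ) :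
    ∃ A B : Set G, IsHaarNull A ∧ IsHaarMeager B ∧ A ∪ B = Set.univ :=
  union_haarNull_haarMeager_of_central_subgroup_general H hclosed hcentral hH
end
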